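/- arXiv:2410.11784 — 6 statements merged into one kernel-verified Lean document; each statement's English description precedes it below -/
import Mathlib

section
/- Let D be a positive integer with decimal expansion D = Σ_{i=0}^n a_i·10^i (a_n ≠ 0) such that D > rev(D) and E = D − rev(D) has the same number of decimal digits (n+1) as D, and let F = E + rev(E). Then F = Σ_{i=0}^n (10·b_i − b_{i−1} + 10·b_{n−i} − b_{n−i−1})·10^i, where (b_i) is the digital borrow sequence of D; in particular F depends only on the borrow sequence (b_i) and not otherwise on the digits a_i of D. -/
/-!
Subtracting `rev D` from `D` by the schoolbook algorithm produces the digits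
`e i = a i - a (n - i) - b (i - 1) + 10 * b i ∈ [0, 9]`, and the final borrow `b n` vanishes
because `D > rev D`. Since `E = D - rev D` has exactly `n + 1` digits, `rev E` has the digits
`e (n - i)`, and in `e i + e (n - i)` the digits of `D` cancel.
-/

/-- Digital reversal of a natural number (in base 10). -/
def rev (D : ℕ) : ℕ := Nat.ofDigits 10 ((Nat.digits 10 D).reverse)

/-- The digital borrow sequence for the subtraction `D - rev D`, where `a` is the
digit sequence of `D` (little-endian) and `n+1` is the number of digits:
`b i = 1` iff `a i - a (n-i) - b (i-1) < 0`, with `b (-1) = 0`. -/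
def borrow (a : ℕ → ℕ) (n : ℕ) : ℕ → ℕ
  | 0 => if (a 0 : ℤ) - (a n : ℤ) < 0 then 1 else 0
  | i + 1 => if (a (i + 1) : ℤ) - (a (n - (i + 1)) : ℤ) - (borrow a n i : ℤ) < 0 then 1 else 0

/-- The borrow sequence with indices shifted by one, so that `borrowExt a n 0 = b (-1) = 0`
and `borrowExt a n (j+1) = b j`. -/
def borrowExt (a : ℕ → ℕ) (n : ℕ) : ℕ → ℕ
  | 0 => 0
  | j + 1 => borrow a n j

open Finset

theorem Nat.ofDigits_map_range (b : ℕ) (g : ℕ → ℕ) (m : ℕ) :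
    Nat.ofDigits b ((List.range m).map g) = ∑ i ∈ range m, g i * b ^ i := by
  induction m with
  | zero => simp
  | succ m ih =>
    rw [List.range_succ, List.map_append, Nat.ofDigits_append, sum_range_succ, ih]
    simp [Nat.ofDigits_singleton, mul_comm]

theorem List.reverse_map_range_succ {α : Type*} (g : ℕ → α) (m : ℕ) :
    ((List.range (m + 1)).map g).reverse = (List.range (m + 1)).map fun i => g (m - i) := by
  rw [← List.map_reverse, List.range_eq_range', List.reverse_range', List.map_map,
    ← List.range_eq_range']
  simp [Function.comp_def]

theorem Nat.digits_sum_range {b : ℕ} (hb : 1 < b) {g : ℕ → ℕ} {n : ℕ}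
    (hg : ∀ i ≤ n, g i < b) (hgn : g n ≠ 0) :
    Nat.digits b (∑ i ∈ range (n + 1), g i * b ^ i) = (List.range (n + 1)).map g := by
  rw [← Nat.ofDigits_map_range]
  refine Nat.digits_ofDigits b hb _ ?_ ?_
  · simp only [List.mem_map, List.mem_range]
    rintro _ ⟨i, hi, rfl⟩
    exact hg i (by omega)
  · intro _
    simpa [List.getLast_eq_getElem] using hgn

theorem Nat.ne_zero_of_length_digits_sum_range {b : ℕ} (hb : 1 < b) {g : ℕ → ℕ} {n : ℕ}
    (hg : ∀ i < n, g i < b)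
    (hlen : (Nat.digits b (∑ i ∈ range (n + 1), g i * b ^ i)).length = n + 1) :
    g n ≠ 0 := by
  intro hgn
  have hsmall : ∑ i ∈ range (n + 1), g i * b ^ i < b ^ n := by
    rw [sum_range_succ, hgn, zero_mul, add_zero, ← Nat.ofDigits_map_range]
    simpa using Nat.ofDigits_lt_base_pow_length hb (l := (List.range n).map g)
      (by simpa using hg)
  have := (Nat.digits_length_le_iff hb _).2 hsmall
  omega

theorem rev_sum_range {g : ℕ → ℕ} {n : ℕ} (hg : ∀ i ≤ n, g i < 10) (hgn : g n ≠ 0) :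
    rev (∑ i ∈ range (n + 1), g i * 10 ^ i) = ∑ i ∈ range (n + 1), g (n - i) * 10 ^ i := by
  rw [rev, Nat.digits_sum_range (by norm_num) hg hgn, List.reverse_map_range_succ,
    Nat.ofDigits_map_range]

theorem Int.sum_range_mul_pow_lt {b : ℤ} (hb : 0 < b) {g : ℕ → ℤ} {m : ℕ}
    (hg : ∀ i < m, g i < b) : ∑ i ∈ Finset.range m, g i * b ^ i < b ^ m := by
  induction m with
  | zero => simp
  | succ m ih =>
    have hsum := ih fun i hi => hg i (by omega)
    have htop : g m * b ^ m ≤ (b - 1) * b ^ m :=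
      mul_le_mul_of_nonneg_right (by linarith [hg m (by omega)]) (by positivity)
    rw [sum_range_succ, pow_succ]
    linarith

section Borrow

variable (a : ℕ → ℕ) (n : ℕ)

@[simp]
theorem borrowExt_zero : borrowExt a n 0 = 0 := rfl

@[simp]
theorem borrowExt_succ (i : ℕ) : borrowExt a n (i + 1) = borrow a n i := rfl

theorem borrow_eq_ite (i : ℕ) :
    borrow a n i = if (a i : ℤ) - a (n - i) - borrowExt a n i < 0 then 1 else 0 := by
  cases i <;> simp [borrow]

theorem borrow_le_one (i : ℕ) : borrow a n i ≤ 1 := by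
  rw [borrow_eq_ite]
  split <;> omega

theorem borrowExt_le_one : ∀ i, borrowExt a n i ≤ 1
  | 0 => zero_le_one
  | i + 1 => borrow_le_one a n i

def diffDigit (i : ℕ) : ℤ := a i - a (n - i) - borrowExt a n i + 10 * borrow a n i

variable {a n}

theorem diffDigit_mem_Icc (ha : ∀ i ≤ n, a i < 10) {i : ℕ} (hi : i ≤ n) :
    diffDigit a n i ∈ Set.Icc 0 9 := by
  have hai := ha i hi
  have hani := ha (n - i) (by omega)
  have hbi := borrowExt_le_one a n i
  have hb := borrow_eq_ite a n i
  rw [diffDigit, Set.mem_Icc]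
  split at hb <;> rw [hb] <;> push_cast <;> omega

variable (a n)

theorem sum_sub_sum_reflect_eq (m : ℕ) :
    ∑ i ∈ range m, (a i : ℤ) * 10 ^ i - ∑ i ∈ range m, (a (n - i) : ℤ) * 10 ^ i =
      ∑ i ∈ range m, diffDigit a n i * 10 ^ i - borrowExt a n m * 10 ^ m := by
  induction m with
  | zero => simp
  | succ m ih =>
    rw [sum_range_succ, sum_range_succ, sum_range_succ, borrowExt_succ, diffDigit]
    linear_combination ih

variable {a n}

theorem sum_sub_sum_reflect_eq_sum_diffDigit (ha : ∀ i ≤ n, a i < 10)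
    (hpos : 0 < ∑ i ∈ range (n + 1), (a i : ℤ) * 10 ^ i -
      ∑ i ∈ range (n + 1), (a (n - i) : ℤ) * 10 ^ i) :
    ∑ i ∈ range (n + 1), (a i : ℤ) * 10 ^ i - ∑ i ∈ range (n + 1), (a (n - i) : ℤ) * 10 ^ i =
      ∑ i ∈ range (n + 1), diffDigit a n i * 10 ^ i := by
  rw [sum_sub_sum_reflect_eq] at hpos ⊢
  have hlt : ∑ i ∈ range (n + 1), diffDigit a n i * 10 ^ i < 10 ^ (n + 1) :=
    Int.sum_range_mul_pow_lt (by norm_num) fun i hi =>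
      Int.lt_add_one_iff.2 (diffDigit_mem_Icc ha (by omega)).2
  obtain hlast | hlast : borrow a n n = 0 ∨ borrow a n n = 1 := by
    have := borrow_le_one a n n
    omega
  · simp [hlast]
  · simp only [borrowExt_succ, hlast, Nat.cast_one, one_mul] at hpos
    linarith

theorem diffDigit_add_diffDigit_reflect {i : ℕ} (hi : i ≤ n) :
    diffDigit a n i + diffDigit a n (n - i) =
      10 * (borrowExt a n (i + 1) : ℤ) - borrowExt a n i
        + 10 * (borrowExt a n (n - i + 1) : ℤ) - borrowExt a n (n - i) := by
  simp only [diffDigit, borrowExt_succ, Nat.sub_sub_self hi]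
  ring

end Borrow

/-- If `D = Σ_{i=0}^n a_i 10^i` (with `a_n ≠ 0`, digits `< 10`),
`D > rev D`, and `E = D - rev D` has the same number `n+1` of decimal digits as `D`,
then `F = E + rev E` satisfies
`F = Σ_{i=0}^n (10 b_i - b_{i-1} + 10 b_{n-i} - b_{n-i-1}) 10^i`,
so `F` depends only on the borrow sequence. -/
theorem stmt0 (D n : ℕ) (a : ℕ → ℕ)
    (ha : ∀ i, i ≤ n → a i < 10) (han : a n ≠ 0)
    (hD : D = ∑ i ∈ Finset.range (n + 1), a i * 10 ^ i)
    (hlt : rev D < D)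
    (hlen : (Nat.digits 10 (D - rev D)).length = n + 1) :
    ((D - rev D) + rev (D - rev D) : ℤ) =
      ∑ i ∈ Finset.range (n + 1),
        (10 * (borrowExt a n (i + 1) : ℤ) - (borrowExt a n i : ℤ)
          + 10 * (borrowExt a n (n - i + 1) : ℤ) - (borrowExt a n (n - i) : ℤ)) * 10 ^ i := by
  set e := diffDigit a n
  have he : ∀ i ≤ n, e i ∈ Set.Icc 0 9 := fun i => diffDigit_mem_Icc ha
  have hrevD : rev D = ∑ i ∈ range (n + 1), a (n - i) * 10 ^ i := hD ▸ rev_sum_range ha han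
  have hdiff : (D : ℤ) - rev D = ∑ i ∈ range (n + 1), e i * 10 ^ i := by
    have hpos : (rev D : ℤ) < D := by exact_mod_cast hlt
    rw [hrevD, hD] at hpos ⊢
    push_cast at hpos ⊢
    exact sum_sub_sum_reflect_eq_sum_diffDigit ha (sub_pos.2 hpos)
  have hE : D - rev D = ∑ i ∈ range (n + 1), (e i).toNat * 10 ^ i := by
    zify [hlt.le]
    rw [hdiff]
    refine sum_congr rfl fun i hi => ?_
    rw [Int.toNat_of_nonneg (he i (Nat.lt_succ_iff.1 (mem_range.1 hi))).1]
  have hrevE : rev (D - rev D) = ∑ i ∈ range (n + 1), (e (n - i)).toNat * 10 ^ i := by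
    have hdig : ∀ i ≤ n, (e i).toNat < 10 := fun i hi => by
      obtain ⟨-, h9⟩ := he i hi
      omega
    rw [hE] at hlen ⊢
    exact rev_sum_range hdig
      (Nat.ne_zero_of_length_digits_sum_range (by norm_num) (fun i hi => hdig i hi.le) hlen)
  rw [hdiff, hrevE]
  push_cast
  rw [← sum_add_distrib]
  refine sum_congr rfl fun i hi => ?_
  have hi : i ≤ n := Nat.lt_succ_iff.1 (mem_range.1 hi)
  rw [Int.toNat_of_nonneg (he (n - i) (by omega)).1, ← add_mul, diffDigit_add_diffDigit_reflect hi]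
end

section
/- Let D be a positive integer with exactly n+1 decimal digits such that D > rev(D) and D − rev(D) has the same number of decimal digits as D, and let F be the Papadakis–Webster integer produced by D. Then the quotient F/99 has exactly n decimal digits, and its leading decimal digit is 1. -/
/-!
Let `a i` be the digits of `D` and `c i ∈ {0, 1}` the borrow into position `i` when `rev D` is
subtracted from `D`. The digits of `E = D - rev D` are `e i = a i - a (n - i) - c i + 10 c (i + 1)`,
so the `a`'s cancel in `e i + e (n - i)`. Hence `E + rev E = ∑ i ≤ n, (e i + e (n - i)) 10 ^ i`
splits into two telescoping sums which, since `c 0 = c (n + 1) = 0`, add up to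
`99 * ∑ j < n, c (n - j) 10 ^ j`. So `F / 99` has the decimal digits `c 1, …, c n` (most significant
first), and `c 1 = 1` because `a 0 < a n`: as `E` has `n + 1` digits, `D ≥ rev D + 10 ^ n`.
-/

open Finset

namespace Nat

theorem mod_pow_eq_sum_range (b X m : ℕ) :
    X % b ^ m = ∑ i ∈ range m, X / b ^ i % b * b ^ i := by
  induction m with
  | zero => simp [Nat.mod_one]
  | succ m ih => rw [sum_range_succ, Nat.mod_pow_succ, ih, mul_comm (b ^ m)]

theorem eq_sum_range_div_pow_mod {b X m : ℕ} (hX : X < b ^ m) :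
    X = ∑ i ∈ range m, X / b ^ i % b * b ^ i := by
  rw [← mod_pow_eq_sum_range, Nat.mod_eq_of_lt hX]

theorem ofDigits_div_pow_mod {b : ℕ} {l : List ℕ} (hl : ∀ x ∈ l, x < b) (i : ℕ) :
    ofDigits b l / b ^ i % b = l.getD i 0 := by
  induction l generalizing i with
  | nil => simp
  | cons d t ih =>
    have hd : d < b := hl d List.mem_cons_self
    rcases i with _ | i
    · simp [ofDigits_cons, Nat.mod_eq_of_lt hd]
    · rw [ofDigits_cons, List.getD_cons_succ, pow_succ', ← Nat.div_div_eq_div_mul,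
        Nat.add_mul_div_left _ _ (by omega), Nat.div_eq_of_lt hd, zero_add,
        ih fun x hx => hl x (List.mem_cons_of_mem _ hx)]

theorem ofDigits_map_range_s4 (b : ℕ) (f : ℕ → ℕ) (n : ℕ) :
    ofDigits b ((List.range n).map f) = ∑ j ∈ range n, f j * b ^ j := by
  induction n with
  | zero => simp
  | succ n ih =>
    rw [List.range_succ, List.map_append, ofDigits_append, ih, sum_range_succ]
    simp [mul_comm]

/-- The borrow into position `i` of the schoolbook subtraction `X - Y` in base `b`. -/
def subBorrow (b X Y i : ℕ) : ℕ := if X % b ^ i < Y % b ^ i then 1 else 0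

variable {b X Y : ℕ}

theorem subBorrow_zero : subBorrow b X Y 0 = 0 := by simp [subBorrow, Nat.mod_one]

theorem subBorrow_le_one (i : ℕ) : subBorrow b X Y i ≤ 1 := by
  unfold subBorrow
  split_ifs <;> omega

theorem subBorrow_eq_zero_of_lt_pow {m : ℕ} (hYX : Y ≤ X) (hX : X < b ^ m) :
    subBorrow b X Y m = 0 := by
  rw [subBorrow, Nat.mod_eq_of_lt hX, Nat.mod_eq_of_lt (hYX.trans_lt hX), if_neg hYX.not_gt]

theorem sub_emod_pow_eq (hb : 0 < b) (hYX : Y ≤ X) (i : ℕ) :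
    ((X - Y : ℕ) : ℤ) % b ^ i = X % b ^ i - Y % b ^ i + subBorrow b X Y i * b ^ i := by
  have hp : (0 : ℤ) < b ^ i := by positivity
  have hX := Int.emod_nonneg X hp.ne'
  have hX' := Int.emod_lt_of_pos X hp
  have hY := Int.emod_nonneg Y hp.ne'
  have hY' := Int.emod_lt_of_pos Y hp
  have hsub : ((X - Y : ℕ) : ℤ) = (X % b ^ i - Y % b ^ i + subBorrow b X Y i * b ^ i)
      + b ^ i * (X / b ^ i - Y / b ^ i - subBorrow b X Y i) := by
    rw [Nat.cast_sub hYX]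
    linear_combination (Int.mul_ediv_add_emod X (b ^ i)).symm
      - (Int.mul_ediv_add_emod Y (b ^ i)).symm
  rw [hsub, Int.add_mul_emod_self_left, Int.emod_eq_of_lt]
  all_goals
    unfold subBorrow
    split_ifs with h
    · have : (X : ℤ) % b ^ i < Y % b ^ i := by exact_mod_cast h
      push_cast
      linarith
    · have : (Y : ℤ) % b ^ i ≤ X % b ^ i := by exact_mod_cast not_lt.mp h
      push_cast
      linarith

theorem sub_ediv_pow_emod (hb : 0 < b) (hYX : Y ≤ X) (i : ℕ) :
    ((X - Y : ℕ) : ℤ) / b ^ i % b = X / b ^ i % b - Y / b ^ i % b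
      - subBorrow b X Y i + b * subBorrow b X Y (i + 1) := by
  have hp : (b : ℤ) ^ i ≠ 0 := by positivity
  have hE := congrArg (Nat.cast : ℕ → ℤ) (Nat.mod_pow_succ (x := X - Y) (b := b) (k := i))
  have hX := congrArg (Nat.cast : ℕ → ℤ) (Nat.mod_pow_succ (x := X) (b := b) (k := i))
  have hY := congrArg (Nat.cast : ℕ → ℤ) (Nat.mod_pow_succ (x := Y) (b := b) (k := i))
  push_cast at hE hX hY
  apply mul_left_cancel₀ hp
  linear_combination sub_emod_pow_eq hb hYX (i + 1) - sub_emod_pow_eq hb hYX i - hE + hX - hY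

end Nat

section Telescoping

variable {R : Type*} [CommRing R]

theorem sum_range_mul_succ_sub_mul_pow (x : R) (c : ℕ → R) (m : ℕ) :
    ∑ i ∈ range m, (x * c (i + 1) - c i) * x ^ i = c m * x ^ m - c 0 := by
  have h := sum_range_sub (fun i => c i * x ^ i) m
  rw [pow_zero, mul_one] at h
  rw [← h]
  exact sum_congr rfl fun i _ => by ring

theorem sum_range_mul_sub_succ_mul_pow (x : R) (d : ℕ → R) {n : ℕ} (h0 : d 0 = 0)
    (hn : d (n + 1) = 0) :
    ∑ j ∈ range (n + 1), (x * d j - d (j + 1)) * x ^ j =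
      (x ^ 2 - 1) * ∑ j ∈ range n, d (j + 1) * x ^ j := by
  have hmul : ∑ j ∈ range (n + 1), x * d j * x ^ j =
      x ^ 2 * ∑ j ∈ range n, d (j + 1) * x ^ j := by
    rw [sum_range_succ', h0, mul_sum]
    simp only [mul_zero, zero_mul, add_zero]
    exact sum_congr rfl fun j _ => by ring
  have hshift : ∑ j ∈ range (n + 1), d (j + 1) * x ^ j = ∑ j ∈ range n, d (j + 1) * x ^ j := by
    rw [sum_range_succ, hn, zero_mul, add_zero]
  simp only [sub_mul, sum_sub_distrib, hmul, hshift]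
  ring

end Telescoping

open Nat

theorem rev_lt_pow_length (D : ℕ) : rev D < 10 ^ (digits 10 D).length := by
  simpa [rev] using ofDigits_lt_base_pow_length (by norm_num)
    fun x hx => digits_lt_base (by norm_num) (List.mem_reverse.mp hx)

theorem rev_div_pow_mod {D n i : ℕ} (hD : (digits 10 D).length = n + 1) (hi : i ≤ n) :
    rev D / 10 ^ i % 10 = D / 10 ^ (n - i) % 10 := by
  rw [rev, ofDigits_div_pow_mod fun x hx => digits_lt_base (by norm_num) (List.mem_reverse.mp hx),
    List.getD_reverse _ (by omega), ← getD_digits _ _ (by norm_num), hD, Nat.add_sub_cancel]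

theorem add_rev_eq_sum_range {X n : ℕ} (hX : (digits 10 X).length = n + 1) :
    X + rev X = ∑ i ∈ range (n + 1), (X / 10 ^ i % 10 + X / 10 ^ (n - i) % 10) * 10 ^ i := by
  have hXlt : X < 10 ^ (n + 1) := hX ▸ lt_base_pow_length_digits (by norm_num)
  have hrevlt : rev X < 10 ^ (n + 1) := hX ▸ rev_lt_pow_length X
  rw [congrArg₂ (· + ·) (eq_sum_range_div_pow_mod hXlt) (eq_sum_range_div_pow_mod hrevlt),
    ← sum_add_distrib]
  refine sum_congr rfl fun i hi => ?_
  rw [rev_div_pow_mod hX (Nat.lt_succ_iff.mp (mem_range.mp hi)), add_mul]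

theorem mod_ten_lt_div_pow_mod {D n : ℕ} (hD : (digits 10 D).length = n + 1)
    (hE : 10 ^ n ≤ D - rev D) : D % 10 < D / 10 ^ n % 10 := by
  have hpow : 0 < 10 ^ n := by positivity
  have hDlt : D < 10 ^ (n + 1) := hD ▸ lt_base_pow_length_digits (by norm_num)
  have hrev : rev D / 10 ^ n = D % 10 := by
    have hlt : rev D / 10 ^ n < 10 := Nat.div_lt_of_lt_mul (by rw [← pow_succ]; omega)
    simpa [Nat.mod_eq_of_lt hlt] using rev_div_pow_mod hD le_rfl
  have hlead : D / 10 ^ n < 10 := Nat.div_lt_of_lt_mul (by rwa [← pow_succ])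
  calc D % 10 < rev D / 10 ^ n + 1 := by omega
    _ = (rev D + 10 ^ n) / 10 ^ n := (Nat.add_div_right _ hpow).symm
    _ ≤ D / 10 ^ n := Nat.div_le_div_right (by omega)
    _ = D / 10 ^ n % 10 := (Nat.mod_eq_of_lt hlead).symm

theorem digit_sub_rev_add_mirror_digit {D n i : ℕ} (hD : (digits 10 D).length = n + 1)
    (hrev : rev D ≤ D) (hi : i ≤ n) :
    (((D - rev D) / 10 ^ i % 10 + (D - rev D) / 10 ^ (n - i) % 10 : ℕ) : ℤ) =
      (10 * subBorrow 10 D (rev D) (i + 1) - subBorrow 10 D (rev D) i) +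
        (10 * subBorrow 10 D (rev D) (n + 1 - i) - subBorrow 10 D (rev D) (n - i)) := by
  have hdigit := congrArg (Nat.cast : ℕ → ℤ) (rev_div_pow_mod hD hi)
  have hmirror := congrArg (Nat.cast : ℕ → ℤ) (rev_div_pow_mod hD (Nat.sub_le n i))
  rw [Nat.sub_sub_self hi] at hmirror
  have hsub := sub_ediv_pow_emod (b := 10) (by norm_num) hrev i
  have hsub' := sub_ediv_pow_emod (b := 10) (by norm_num) hrev (n - i)
  rw [show n - i + 1 = n + 1 - i by omega] at hsub'
  push_cast at hdigit hmirror hsub hsub' ⊢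
  linear_combination hsub + hsub' - hdigit - hmirror

theorem sub_rev_add_rev_eq {D n : ℕ} (hD : (digits 10 D).length = n + 1)
    (hE : (digits 10 (D - rev D)).length = n + 1) :
    D - rev D + rev (D - rev D) =
      99 * ∑ j ∈ range n, subBorrow 10 D (rev D) (n - j) * 10 ^ j := by
  set c := subBorrow 10 D (rev D)
  have hrev : rev D ≤ D := by
    have := (lt_digits_length_iff (b := 10) (k := n) (by norm_num) (D - rev D)).mp (by omega)
    have : 0 < 10 ^ n := by positivity
    omega
  have hsum : ((D - rev D + rev (D - rev D) : ℕ) : ℤ) = ∑ i ∈ range (n + 1),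
      ((10 * (c (i + 1) : ℤ) - c i) * 10 ^ i + (10 * c (n + 1 - i) - c (n - i)) * 10 ^ i) := by
    rw [add_rev_eq_sum_range hE, Nat.cast_sum]
    refine sum_congr rfl fun i hi => ?_
    rw [Nat.cast_mul, digit_sub_rev_add_mirror_digit hD hrev (Nat.lt_succ_iff.mp (mem_range.mp hi))]
    push_cast
    ring
  have htop : c (n + 1) = 0 :=
    subBorrow_eq_zero_of_lt_pow hrev (hD ▸ lt_base_pow_length_digits (by norm_num))
  have hbot : c 0 = 0 := subBorrow_zero
  have hlow := sum_range_mul_succ_sub_mul_pow (10 : ℤ) (fun i => (c i : ℤ)) (n + 1)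
  have hhigh := sum_range_mul_sub_succ_mul_pow (10 : ℤ) (fun j => (c (n + 1 - j) : ℤ))
    (n := n) (by simp [htop]) (by simp [hbot])
  simp only [Nat.add_sub_add_right] at hhigh
  rw [sum_add_distrib, hlow, hhigh, htop, hbot] at hsum
  apply Nat.cast_injective (R := ℤ)
  rw [hsum]
  push_cast
  ring

theorem stmt4_general (D n : ℕ)
    (hlenD : (Nat.digits 10 D).length = n + 1)
    (hlenE : (Nat.digits 10 (D - rev D)).length = n + 1) :
    (Nat.digits 10 (((D - rev D) + rev (D - rev D)) / 99)).length = n ∧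
    (Nat.digits 10 (((D - rev D) + rev (D - rev D)) / 99)).getLast? = some 1 := by
  set c := subBorrow 10 D (rev D)
  have hlead := mod_ten_lt_div_pow_mod hlenD
    ((lt_digits_length_iff (b := 10) (k := n) (by norm_num) _).mp (by omega))
  have hn : n ≠ 0 := by
    rintro rfl
    simp at hlead
  have hc1 : c 1 = 1 := by
    have hrev0 := rev_div_pow_mod hlenD (Nat.zero_le n)
    simp only [pow_zero, Nat.div_one, Nat.sub_zero] at hrev0
    simp [c, subBorrow, hrev0, hlead]
  set L := (List.range n).map fun j => c (n - j)
  have hlast : L.getLast? = some 1 := by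
    simp [L, List.getLast?_range, hn, Nat.sub_sub_self (Nat.one_le_iff_ne_zero.mpr hn), hc1]
  have hdigits : digits 10 (ofDigits 10 L) = L := by
    refine digits_ofDigits 10 (by norm_num) L (fun x hx => ?_) fun hL => ?_
    · obtain ⟨j, -, rfl⟩ := List.mem_map.mp hx
      exact (subBorrow_le_one _).trans_lt (by norm_num)
    · simp [(List.getLast_eq_iff_getLast?_eq_some hL).mpr hlast]
  rw [sub_rev_add_rev_eq hlenD hlenE, ← ofDigits_map_range_s4,
    Nat.mul_div_cancel_left _ (by norm_num), hdigits]
  exact ⟨by simp [L], hlast⟩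

/-- if `D` has exactly `n+1` decimal digits, `D > rev D`, and
`E = D - rev D` has the same number of decimal digits as `D`, then the quotient
`F / 99` of the Papadakis–Webster integer `F = E + rev E` has exactly `n` decimal
digits, and its leading (most significant) decimal digit is 1. -/
theorem stmt4 (D n : ℕ) (hpos : 0 < D)
    (hlenD : (Nat.digits 10 D).length = n + 1)
    (hlt : rev D < D)
    (hlenE : (Nat.digits 10 (D - rev D)).length = n + 1) :
    (Nat.digits 10 (((D - rev D) + rev (D - rev D)) / 99)).length = n ∧
    (Nat.digits 10 (((D - rev D) + rev (D - rev D)) / 99)).getLast? = some 1 :=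
  stmt4_general D n hlenD hlenE
end

section
/- If D and E are positive integers forming a 2-cycle of the iterative digital reversal map, i.e., IDR(D) = E, IDR(E) = D, and E > D, then E = 10·D. -/
/-- The iterative digital reversal map: `D ↦ D - rev D` if `rev D < D`,
and `D ↦ D + rev D` if `rev D ≥ D`. -/
def IDR (D : ℕ) : ℕ := if rev D < D then D - rev D else D + rev D

lemma rev_of_mul10 (X : ℕ) (hX : 0 < X) (h : X % 10 = 0) : rev X = rev (X / 10) := by
  unfold rev
  rw [Nat.digits_def' (by norm_num : (1:ℕ) < 10) hX, h]
  rw [List.reverse_cons, Nat.ofDigits_append]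
  simp [Nat.ofDigits]

lemma rev_rev_of_mod (X : ℕ) (h : X % 10 ≠ 0) : rev (rev X) = X := by
  have hX : 0 < X := by
    rcases Nat.eq_zero_or_pos X with h0 | h0
    · simp [h0] at h
    · exact h0
  unfold rev
  have hne : (Nat.digits 10 X).reverse ≠ [] := by
    simp [Nat.digits_ne_nil_iff_ne_zero, hX.ne']
  rw [Nat.digits_ofDigits 10 (by norm_num) _
    (fun l hl => Nat.digits_lt_base (by norm_num) (List.mem_reverse.mp hl))
    (fun hne' => by
      have hd : Nat.digits 10 X = X % 10 :: Nat.digits 10 (X / 10) :=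
        Nat.digits_def' (by norm_num : (1:ℕ) < 10) hX
      simp [List.getLast_reverse, hd, h])]
  rw [List.reverse_reverse, Nat.ofDigits_digits]

lemma rev_rev_pow (X : ℕ) (hX : 0 < X) : ∃ k, X = rev (rev X) * 10 ^ k := by
  induction X using Nat.strong_induction_on with
  | _ X ih =>
  by_cases h : X % 10 = 0
  · have h10 : 10 ∣ X := Nat.dvd_of_mod_eq_zero h
    have hq : 0 < X / 10 := Nat.div_pos (Nat.le_of_dvd hX h10) (by norm_num)
    obtain ⟨k, hk⟩ := ih (X / 10) (Nat.div_lt_self hX (by norm_num)) hq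
    refine ⟨k + 1, ?_⟩
    rw [rev_of_mul10 X hX h]
    calc X = X / 10 * 10 := (Nat.div_mul_cancel h10).symm
    _ = rev (rev (X / 10)) * 10 ^ k * 10 := by rw [← hk]
    _ = rev (rev (X / 10)) * 10 ^ (k + 1) := by ring
  · exact ⟨0, by rw [rev_rev_of_mod X h]; ring⟩

lemma rev_lt (X : ℕ) (hX : 0 < X) : rev X < 10 * X := by
  have h1 : rev X < 10 ^ (Nat.digits 10 X).length := by
    unfold rev
    have := Nat.ofDigits_lt_base_pow_length (b := 10) (l := (Nat.digits 10 X).reverse)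
      (by norm_num) (fun l hl => Nat.digits_lt_base (by norm_num) (List.mem_reverse.mp hl))
    simpa using this
  have h2 : 10 ^ (Nat.digits 10 X).length ≤ 10 * X :=
    Nat.base_pow_length_digits_le 10 X (by norm_num) hX.ne'
  omega

/-- if positive integers `D` and `E` form a 2-cycle of IDR,
i.e. `IDR D = E`, `IDR E = D`, and `E > D`, then `E = 10 · D`. -/
theorem stmt8 (D E : ℕ) (hD : 0 < D) (hE : 0 < E)
    (h1 : IDR D = E) (h2 : IDR E = D) (hlt : D < E) : E = 10 * D := by
  unfold IDR at h1 h2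
  have hRD : ¬ rev D < D := by
    intro h
    rw [if_pos h] at h1
    omega
  rw [if_neg hRD] at h1
  have hRE : rev E < E := by
    by_contra h
    rw [if_neg h] at h2
    omega
  rw [if_pos hRE] at h2
  have hrev : rev E = rev D := by omega
  obtain ⟨a, ha⟩ := rev_rev_pow E hE
  obtain ⟨b, hb⟩ := rev_rev_pow D hD
  rw [hrev] at ha
  set C := rev (rev D) with hC
  have hCpos : 0 < C := by
    rcases Nat.eq_zero_or_pos C with h0 | h0
    · rw [h0] at hb; simp at hb; omega
    · exact h0
  have hab : b < a := by
    by_contra h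
    push_neg at h
    have : E ≤ D := by
      rw [ha, hb]
      exact Nat.mul_le_mul_left C (Nat.pow_le_pow_right (by norm_num) h)
    omega
  have hEsmall : E < 100 * D := by
    have := rev_lt D hD
    omega
  have hab1 : a = b + 1 := by
    by_contra h
    have h2b : b + 2 ≤ a := by omega
    have : 100 * D ≤ E := by
      calc 100 * D = C * 10 ^ b * 100 := by rw [hb]; ring
      _ = C * 10 ^ (b + 2) := by ring
      _ ≤ C * 10 ^ a := Nat.mul_le_mul_left C (Nat.pow_le_pow_right (by norm_num) h2b)
      _ = E := ha.symm
    omega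
  rw [ha, hab1, hb]
  ring
end

section
/- For a positive integer D, the pair {D, 10·D} is a 2-cycle of the iterative digital reversal map (i.e., IDR(D) = 10·D and IDR(10·D) = D) if and only if rev(D) = 9·D; in other words, the smaller element of any IDR 2-cycle is precisely a 9-palintiple, and every 9-palintiple D together with 10·D forms an IDR 2-cycle. -/
/-- for a positive integer `D`, the pair `{D, 10·D}` is a 2-cycle
of IDR if and only if `rev D = 9·D`, i.e. `D` is a 9-palintiple. -/
theorem stmt9 (D : ℕ) (hD : 0 < D) :
    (IDR D = 10 * D ∧ IDR (10 * D) = D) ↔ rev D = 9 * D := by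
  have hrev10 : rev (10 * D) = rev D := by
    have h10 : 0 < 10 * D := by omega
    have hdig : Nat.digits 10 (10 * D) = 0 :: Nat.digits 10 D := by
      rw [Nat.digits_def' (by norm_num : 1 < 10) h10]
      congr 1
      · omega
      · congr 1; omega
    unfold rev
    rw [hdig, List.reverse_cons, Nat.ofDigits_append]
    simp [Nat.ofDigits]
  constructor
  · rintro ⟨h1, _⟩
    unfold IDR at h1
    split_ifs at h1 with h
    · omega
    · omega
  · intro h9
    have hlt : ¬ rev D < D := by omega
    constructor
    · unfold IDR; rw [if_neg hlt]; omega
    · unfold IDR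
      rw [hrev10, if_pos (by omega)]
      omega
end

section
/- For every integer L ≥ 0, the integer M_L = 11·(10^{L+2} − 1), whose decimal digit string is 10(9)_L89 (a 1, a 0, then L nines, then 8, 9), satisfies rev(M_L) = 9·M_L; consequently M_L and 10·M_L form a 2-cycle of the iterative digital reversal map. -/
/-! A multiple of ten reverses like its quotient, since a trailing zero becomes a leading one.
So `rev D = 9 D` gives `rev (10 D) = 9 D` as well, and `IDR` goes `D ↦ D + 9 D = 10 D ↦ 10 D - 9 D = D`.
For `M_L = 11 (10 ^ (L + 2) - 1)` the identity `rev M_L = 9 M_L` is read off its digit string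
`10 9…9 89`, whose reversal `98 9…9 01` is `99 (10 ^ (L + 2) - 1)`. -/

open Nat List

theorem Nat.ofDigits_replicate_pred (b L : ℕ) :
    ofDigits b (replicate L (b - 1)) = b ^ L - 1 := by
  induction L with
  | zero => simp
  | succ L ih =>
    rcases Nat.eq_zero_or_pos b with rfl | hb
    · simp [ofDigits_replicate_zero]
    have hpow : 1 ≤ b ^ L := Nat.one_le_pow _ _ hb
    rw [replicate_succ, ofDigits_cons, ih, pow_succ, Nat.mul_sub_one, mul_comm b]
    have : b ≤ b ^ L * b := Nat.le_mul_of_pos_left b hpow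
    omega

theorem rev_ten_mul {n : ℕ} (hn : 0 < n) : rev (10 * n) = rev n := by
  rw [rev, digits_base_mul (by norm_num) hn, ofDigits_reverse_zero_cons, rev]

theorem IDR_of_lt {D : ℕ} (h : rev D < D) : IDR D = D - rev D := if_pos h

theorem IDR_of_le {D : ℕ} (h : D ≤ rev D) : IDR D = D + rev D := if_neg (Nat.not_lt.2 h)

theorem IDR_two_cycle_of_rev_eq_nine_mul {D : ℕ} (hD : 0 < D) (h : rev D = 9 * D) :
    IDR D = 10 * D ∧ IDR (10 * D) = D := by
  have hrev10 : rev (10 * D) = 9 * D := (rev_ten_mul hD).trans h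
  refine ⟨?_, ?_⟩
  · rw [IDR_of_le (by omega), h]
    ring
  · rw [IDR_of_lt (by omega), hrev10]
    omega

theorem digits_eleven_mul_pow_ten_sub_one (L : ℕ) :
    digits 10 (11 * (10 ^ (L + 2) - 1)) = 9 :: 8 :: (replicate L 9 ++ [0, 1]) := by
  have hpow : 1 ≤ 10 ^ L := Nat.one_le_pow _ _ (by norm_num)
  have hpow2 : 10 ^ (L + 2) = 100 * 10 ^ L := by ring
  have hval : ofDigits 10 (9 :: 8 :: (replicate L 9 ++ [0, 1])) = 11 * (10 ^ (L + 2) - 1) := by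
    simp only [ofDigits_cons, ofDigits_append, ofDigits_replicate_pred 10 L, length_replicate,
      ofDigits_nil]
    omega
  rw [← hval]
  refine digits_ofDigits 10 (by norm_num) _ ?_ ?_
  · intro d hd
    simp only [mem_cons, mem_append, mem_replicate, not_mem_nil, or_false] at hd
    omega
  · simp

theorem rev_eleven_mul_pow_ten_sub_one (L : ℕ) :
    rev (11 * (10 ^ (L + 2) - 1)) = 9 * (11 * (10 ^ (L + 2) - 1)) := by
  have hpow : 1 ≤ 10 ^ L := Nat.one_le_pow _ _ (by norm_num)
  have hpow2 : 10 ^ (L + 2) = 100 * 10 ^ L := by ring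
  have hpow1 : 10 ^ (L + 1) = 10 * 10 ^ L := by ring
  rw [rev, digits_eleven_mul_pow_ten_sub_one]
  simp only [reverse_cons, reverse_append, reverse_replicate, reverse_nil, nil_append,
    cons_append, ofDigits_cons, ofDigits_append, ofDigits_replicate_pred 10 L, length_append,
    length_replicate, length_cons, length_nil, zero_add, ofDigits_nil]
  omega

/-- for every `L ≥ 0`, the integer `M_L = 11·(10^{L+2} - 1)`, whose
decimal digit string is `10(9)_L 89`, satisfies `rev M_L = 9·M_L`; consequently
`M_L` and `10·M_L` form a 2-cycle of IDR. -/
theorem stmt11 (L : ℕ) :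
    rev (11 * (10 ^ (L + 2) - 1)) = 9 * (11 * (10 ^ (L + 2) - 1)) ∧
    IDR (11 * (10 ^ (L + 2) - 1)) = 10 * (11 * (10 ^ (L + 2) - 1)) ∧
    IDR (10 * (11 * (10 ^ (L + 2) - 1))) = 11 * (10 ^ (L + 2) - 1) := by
  have hrev := rev_eleven_mul_pow_ten_sub_one L
  have hpos : 0 < 11 * (10 ^ (L + 2) - 1) := by
    have : 1 < 10 ^ (L + 2) := Nat.one_lt_pow (by omega) (by norm_num)
    omega
  exact ⟨hrev, IDR_two_cycle_of_rev_eq_nine_mul hpos hrev⟩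
end

section
/- The integer 1090089109890991089 is a periodic point of the iterative digital reversal map of minimal period 10: IDR^{10}(1090089109890991089) = 1090089109890991089, while IDR^{k}(1090089109890991089) ≠ 1090089109890991089 for every k with 1 ≤ k ≤ 9. -/
private lemma rev0 : rev 1090089109890991089 = 9801990989019800901 := by
  unfold rev; norm_num [Nat.ofDigits]
private lemma idr0 : IDR 1090089109890991089 = 10892080098910791990 := by
  rw [IDR, rev0]; norm_num
private lemma rev1 : rev 10892080098910791990 = 9919701989008029801 := by
  unfold rev; norm_num [Nat.ofDigits]
private lemma idr1 : IDR 10892080098910791990 = 972378109902762189 := by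
  rw [IDR, rev1]; norm_num
private lemma rev2 : rev 972378109902762189 = 981267209901873279 := by
  unfold rev; norm_num [Nat.ofDigits]
private lemma idr2 : IDR 972378109902762189 = 1953645319804635468 := by
  rw [IDR, rev2]; norm_num
private lemma rev3 : rev 1953645319804635468 = 8645364089135463591 := by
  unfold rev; norm_num [Nat.ofDigits]
private lemma idr3 : IDR 1953645319804635468 = 10599009408940099059 := by
  rw [IDR, rev3]; norm_num
private lemma rev4 : rev 10599009408940099059 = 95099004980490099501 := by
  unfold rev; norm_num [Nat.ofDigits]
private lemma idr4 : IDR 10599009408940099059 = 105698014389430198560 := by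
  rw [IDR, rev4]; norm_num
private lemma rev5 : rev 105698014389430198560 = 65891034983410896501 := by
  unfold rev; norm_num [Nat.ofDigits]
private lemma idr5 : IDR 105698014389430198560 = 39806979406019302059 := by
  rw [IDR, rev5]; norm_num
private lemma rev6 : rev 39806979406019302059 = 95020391060497960893 := by
  unfold rev; norm_num [Nat.ofDigits]
private lemma idr6 : IDR 39806979406019302059 = 134827370466517262952 := by
  rw [IDR, rev6]; norm_num
private lemma rev7 : rev 134827370466517262952 = 259262715664073728431 := by
  unfold rev; norm_num [Nat.ofDigits]
private lemma idr7 : IDR 134827370466517262952 = 394090086130590991383 := by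
  rw [IDR, rev7]; norm_num
private lemma rev8 : rev 394090086130590991383 = 383199095031680090493 := by
  unfold rev; norm_num [Nat.ofDigits]
private lemma idr8 : IDR 394090086130590991383 = 10890991098910900890 := by
  rw [IDR, rev8]; norm_num
private lemma rev9 : rev 10890991098910900890 = 9800901989019909801 := by
  unfold rev; norm_num [Nat.ofDigits]
private lemma idr9 : IDR 10890991098910900890 = 1090089109890991089 := by
  rw [IDR, rev9]; norm_num

private lemma it1 : IDR^[1] 1090089109890991089 = 10892080098910791990 := by
  rw [Function.iterate_one, idr0]
private lemma it2 : IDR^[2] 1090089109890991089 = 972378109902762189 := by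
  rw [show (2:ℕ) = 1+1 from rfl, Function.iterate_succ_apply', it1, idr1]
private lemma it3 : IDR^[3] 1090089109890991089 = 1953645319804635468 := by
  rw [show (3:ℕ) = 2+1 from rfl, Function.iterate_succ_apply', it2, idr2]
private lemma it4 : IDR^[4] 1090089109890991089 = 10599009408940099059 := by
  rw [show (4:ℕ) = 3+1 from rfl, Function.iterate_succ_apply', it3, idr3]
private lemma it5 : IDR^[5] 1090089109890991089 = 105698014389430198560 := by
  rw [show (5:ℕ) = 4+1 from rfl, Function.iterate_succ_apply', it4, idr4]
private lemma it6 : IDR^[6] 1090089109890991089 = 39806979406019302059 := by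
  rw [show (6:ℕ) = 5+1 from rfl, Function.iterate_succ_apply', it5, idr5]
private lemma it7 : IDR^[7] 1090089109890991089 = 134827370466517262952 := by
  rw [show (7:ℕ) = 6+1 from rfl, Function.iterate_succ_apply', it6, idr6]
private lemma it8 : IDR^[8] 1090089109890991089 = 394090086130590991383 := by
  rw [show (8:ℕ) = 7+1 from rfl, Function.iterate_succ_apply', it7, idr7]
private lemma it9 : IDR^[9] 1090089109890991089 = 10890991098910900890 := by
  rw [show (9:ℕ) = 8+1 from rfl, Function.iterate_succ_apply', it8, idr8]
private lemma it10 : IDR^[10] 1090089109890991089 = 1090089109890991089 := by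
  rw [show (10:ℕ) = 9+1 from rfl, Function.iterate_succ_apply', it9, idr9]

/-- 1090089109890991089 is a periodic point of IDR of minimal
period 10. -/
theorem stmt17 :
    IDR^[10] 1090089109890991089 = 1090089109890991089 ∧
    (∀ k : ℕ, 1 ≤ k → k ≤ 9 → IDR^[k] 1090089109890991089 ≠ 1090089109890991089) := by
  refine ⟨it10, ?_⟩
  intro k h1 h9
  interval_cases k
  · rw [it1]; norm_num
  · rw [it2]; norm_num
  · rw [it3]; norm_num
  · rw [it4]; norm_num
  · rw [it5]; norm_num
  · rw [it6]; norm_num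
  · rw [it7]; norm_num
  · rw [it8]; norm_num
  · rw [it9]; norm_num
end
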